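/- arXiv:1409.6240 — 3 statements merged into one kernel-verified Lean document; each statement's English description precedes it below -/
import Mathlib

section
/- Let ξ : ℤ → {−1,0,1} be a configuration, l ≥ 1 an integer, and m ≤ n integers. The number of pairs (a,s) such that ξ has a maximal (l+1)-run of sign s at a within [m,n] and such that for every endpoint x ∈ {a, a+l} and every value v ∈ {0, −s} one has g^l_{m,n}(ξ^{x→v}) ≥ g^l_{m,n}(ξ) + 1, is at least g^{l+1}_{m,n}(ξ) − 2 · g^l_{m,n}(ξ). -/
/-- `ξ` has a maximal `l`-run of sign `s` at `a` within `[m, n]`: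
`ξ (a+i) = s` for `0 ≤ i ≤ l-1`, `ξ (a-1) ≠ s`, `ξ (a+l) ≠ s`, `m ≤ a`, `a+l-1 ≤ n`. -/
def IsMaxRun (ξ : ℤ → ℤ) (l m n a s : ℤ) : Prop :=
  (∀ i : ℤ, 0 ≤ i → i ≤ l - 1 → ξ (a + i) = s) ∧
    ξ (a - 1) ≠ s ∧ ξ (a + l) ≠ s ∧ m ≤ a ∧ a + l - 1 ≤ n

/-- `g^l_{m,n}(ξ)`: the number of pairs `(a, s)` with `s ∈ {−1, 1}` such that
`ξ` has a maximal `l`-run of sign `s` at `a` within `[m, n]`. -/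
noncomputable def runCount (l m n : ℤ) (ξ : ℤ → ℤ) : ℕ :=
  Set.ncard {p : ℤ × ℤ | (p.2 = 1 ∨ p.2 = -1) ∧ IsMaxRun ξ l m n p.1 p.2}

def runSet (l m n : ℤ) (ξ : ℤ → ℤ) : Set (ℤ × ℤ) :=
  {p : ℤ × ℤ | (p.2 = 1 ∨ p.2 = -1) ∧ IsMaxRun ξ l m n p.1 p.2}

lemma runCount_eq (l m n : ℤ) (ξ : ℤ → ℤ) : runCount l m n ξ = (runSet l m n ξ).ncard := rfl

lemma runSet_finite (l m n : ℤ) (ξ : ℤ → ℤ) (hl : 1 ≤ l) : (runSet l m n ξ).Finite := by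
  apply Set.Finite.subset ((Set.finite_Icc m n).prod (Set.finite_Icc (-1 : ℤ) 1))
  rintro ⟨a, s⟩ ⟨hs, _, _, _, hma, han⟩
  constructor
  · simp only [Set.mem_Icc]; omega
  · simp only [Set.mem_Icc]; rcases hs with h | h <;> omega

/-- The key counting step: if the runs of `ξ'` contain all runs of `ξ` except possibly `D`
(which is not a run of `ξ`), plus a new pair `N`, then the count strictly increases. -/
lemma ncard_step {S T : Set (ℤ × ℤ)} (hT : T.Finite) (hS : S.Finite)
    (N : ℤ × ℤ) (hN : N ∈ T) (hNS : N ∉ S) (hsub : S ⊆ T) :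
    S.ncard + 1 ≤ T.ncard := by
  have h1 : insert N S ⊆ T := Set.insert_subset hN hsub
  have := Set.ncard_le_ncard h1 hT
  rwa [Set.ncard_insert_of_notMem hNS hS] at this

/-- Flipping the LEFT endpoint of a maximal (l+1)-run: increases the l-run count,
provided the potentially-merged left run `(a-l, -s)` is not present (it always is absent
when `v = 0`). -/
lemma left_flip (ξ : ℤ → ℤ) (l m n a s v : ℤ) (hl : 1 ≤ l)
    (hs : s = 1 ∨ s = -1) (hrun : IsMaxRun ξ (l + 1) m n a s)
    (hv : v = 0 ∨ v = -s) (hD : (a - l, -s) ∉ runSet l m n ξ) :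
    runCount l m n ξ + 1 ≤ runCount l m n (Function.update ξ a v) := by
  obtain ⟨hval, hbl, hbr, hma, hnn⟩ := hrun
  have hvs : v ≠ s := by rcases hs with rfl | rfl <;> rcases hv with rfl | rfl <;> norm_num
  set ξ' := Function.update ξ a v with hξ'
  have hup : ∀ y : ℤ, y ≠ a → ξ' y = ξ y := fun y hy => Function.update_of_ne hy v ξ
  have hupa : ξ' a = v := Function.update_self a v ξ
  rw [runCount_eq, runCount_eq]
  apply ncard_step (runSet_finite l m n ξ' hl) (runSet_finite l m n ξ hl) (a + 1, s)
  · -- the new run (a+1, s) exists in ξ'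
    refine ⟨hs, ?_, ?_, ?_, by omega, by omega⟩
    · intro i hi0 hi1
      rw [hup (a + 1 + i) (by omega), show a + 1 + i = a + (1 + i) by ring]
      exact hval (1 + i) (by omega) (by omega)
    · rw [show a + 1 - 1 = a by ring, hupa]; exact hvs
    · rw [hup (a + 1 + l) (by omega), show a + 1 + l = a + (l + 1) by ring]; exact hbr
  · -- (a+1, s) is not a run of ξ
    rintro ⟨-, -, hb1, -⟩
    apply hb1
    rw [show a + 1 - 1 = a by ring]
    have := hval 0 le_rfl (by omega); simpa using this
  · -- all runs of ξ are preserved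
    rintro ⟨b, t⟩ hbt
    have hmem := hbt
    obtain ⟨ht, hbv, hb1, hb2, hbm, hbn⟩ := hbt
    dsimp only at ht hbv hb1 hb2 hbm hbn
    have has : ξ a = s := by have := hval 0 le_rfl (by omega); simpa using this
    have hnotin : ¬(b ≤ a ∧ a ≤ b + l - 1) := by
      rintro ⟨h1, h2⟩
      have hat : ξ a = t := by
        have := hbv (a - b) (by omega) (by omega)
        rwa [show b + (a - b) = a by ring] at this
      apply hb2
      have := hval (b + l - a) (by omega) (by omega)
      rw [show a + (b + l - a) = b + l by ring] at this
      omega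
    refine ⟨ht, ?_, ?_, ?_, hbm, hbn⟩
    · intro i hi0 hi1; rw [hup (b + i) (by omega)]; exact hbv i hi0 hi1
    · by_cases hba : b - 1 = a
      · rw [hba, hupa]
        rcases hv with rfl | rfl
        · omega
        · intro hts
          have h1 : ξ (a + 1) = s := by
            have := hval 1 (by omega) (by omega); simpa using this
          have h2 : ξ b = t := by
            have := hbv 0 le_rfl (by omega); simpa using this
          have hb : b = a + 1 := by omega
          rw [hb, h1] at h2
          omega
      · rw [hup _ hba]; exact hb1
    · by_cases hba : b + l = a
      · rw [hba, hupa]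
        rcases hv with rfl | rfl
        · omega
        · intro hts
          have hts' : t = -s := by omega
          have : ((a - l : ℤ), -s) = (b, t) := by
            rw [Prod.mk.injEq]; exact ⟨by omega, by omega⟩
          exact hD (this ▸ hmem)
      · rw [hup _ hba]; exact hb2

lemma right_flip (ξ : ℤ → ℤ) (l m n a s v : ℤ) (hl : 1 ≤ l)
    (hs : s = 1 ∨ s = -1) (hrun : IsMaxRun ξ (l + 1) m n a s)
    (hv : v = 0 ∨ v = -s) (hD : (a + l + 1, -s) ∉ runSet l m n ξ) :
    runCount l m n ξ + 1 ≤ runCount l m n (Function.update ξ (a + l) v) := by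
  obtain ⟨hval, hbl, hbr, hma, hnn⟩ := hrun
  have hvs : v ≠ s := by rcases hs with rfl | rfl <;> rcases hv with rfl | rfl <;> norm_num
  set ξ' := Function.update ξ (a + l) v with hξ'
  have hup : ∀ y : ℤ, y ≠ a + l → ξ' y = ξ y := fun y hy => Function.update_of_ne hy v ξ
  have hupa : ξ' (a + l) = v := Function.update_self (a + l) v ξ
  have hal : ξ (a + l) = s := hval l (by omega) (by omega)
  rw [runCount_eq, runCount_eq]
  apply ncard_step (runSet_finite l m n ξ' hl) (runSet_finite l m n ξ hl) (a, s)
  · -- the new run (a, s) exists in ξ'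
    refine ⟨hs, ?_, ?_, ?_, by omega, by omega⟩
    · intro i hi0 hi1
      rw [hup (a + i) (by omega)]
      exact hval i hi0 (by omega)
    · rw [hup (a - 1) (by omega)]; exact hbl
    · rw [hupa]; exact hvs
  · -- (a, s) is not a run of ξ
    rintro ⟨-, -, -, hb2, -⟩
    exact hb2 hal
  · -- all runs of ξ are preserved
    rintro ⟨b, t⟩ hbt
    have hmem := hbt
    obtain ⟨ht, hbv, hb1, hb2, hbm, hbn⟩ := hbt
    dsimp only at ht hbv hb1 hb2 hbm hbn
    have hnotin : ¬(b ≤ a + l ∧ a + l ≤ b + l - 1) := by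
      rintro ⟨h1, h2⟩
      have hat : ξ (a + l) = t := by
        have := hbv (a + l - b) (by omega) (by omega)
        rwa [show b + (a + l - b) = a + l by ring] at this
      apply hb1
      have := hval (b - 1 - a) (by omega) (by omega)
      rw [show a + (b - 1 - a) = b - 1 by ring] at this
      omega
    refine ⟨ht, ?_, ?_, ?_, hbm, hbn⟩
    · intro i hi0 hi1; rw [hup (b + i) (by omega)]; exact hbv i hi0 hi1
    · by_cases hba : b - 1 = a + l
      · rw [hba, hupa]
        rcases hv with rfl | rfl
        · omega
        · intro hts
          have hts' : t = -s := by omega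
          have : ((a + l + 1 : ℤ), -s) = (b, t) := by
            rw [Prod.mk.injEq]; exact ⟨by omega, by omega⟩
          exact hD (this ▸ hmem)
      · rw [hup _ hba]; exact hb1
    · by_cases hba : b + l = a + l
      · rw [hba, hupa]
        rcases hv with rfl | rfl
        · omega
        · intro hts
          have hbs : b = a := by omega
          have h2 : ξ b = t := by
            have := hbv 0 le_rfl (by omega); simpa using this
          have has : ξ a = s := by have := hval 0 le_rfl (by omega); simpa using this
          rw [hbs, has] at h2
          omega
      · rw [hup _ hba]; exact hb2

theorem good_runs_card_ge (ξ : ℤ → ℤ) (hξ : ∀ x, ξ x = -1 ∨ ξ x = 0 ∨ ξ x = 1)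
    (l m n : ℤ) (hl : 1 ≤ l) (hmn : m ≤ n) :
    (runCount (l + 1) m n ξ : ℤ) - 2 * (runCount l m n ξ : ℤ) ≤
      (Set.ncard {p : ℤ × ℤ |
        (p.2 = 1 ∨ p.2 = -1) ∧ IsMaxRun ξ (l + 1) m n p.1 p.2 ∧
        ∀ x ∈ ({p.1, p.1 + l} : Set ℤ), ∀ v ∈ ({0, -p.2} : Set ℤ),
          runCount l m n (Function.update ξ x v) ≥ runCount l m n ξ + 1} : ℤ) := by
  set G : Set (ℤ × ℤ) := {p : ℤ × ℤ |
        (p.2 = 1 ∨ p.2 = -1) ∧ IsMaxRun ξ (l + 1) m n p.1 p.2 ∧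
        ∀ x ∈ ({p.1, p.1 + l} : Set ℤ), ∀ v ∈ ({0, -p.2} : Set ℤ),
          runCount l m n (Function.update ξ x v) ≥ runCount l m n ξ + 1} with hG
  set A := runSet (l + 1) m n ξ with hA
  set S := runSet l m n ξ with hSdef
  have hAfin : A.Finite := runSet_finite _ m n ξ (by omega)
  have hSfin : S.Finite := runSet_finite _ m n ξ hl
  set B := A \ G with hB
  have hGA : G ⊆ A := fun p hp => ⟨hp.1, hp.2.1⟩
  have hGfin : G.Finite := hAfin.subset hGA
  have hBfin : B.Finite := hAfin.subset Set.diff_subset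
  -- every bad run has an adjacent opposite maximal l-run
  have hbad : ∀ p ∈ B, (p.1 - l, -p.2) ∈ S ∨ (p.1 + l + 1, -p.2) ∈ S := by
    rintro ⟨a, s⟩ ⟨⟨hs, hrun⟩, hnotG⟩
    by_contra hcon
    push_neg at hcon
    apply hnotG
    refine ⟨hs, hrun, ?_⟩
    intro x hx v hv
    simp only [Set.mem_insert_iff, Set.mem_singleton_iff] at hx hv
    rcases hx with h | h
    · rw [h]; exact left_flip ξ l m n a s v hl hs hrun hv hcon.1
    · rw [h]; exact right_flip ξ l m n a s v hl hs hrun hv hcon.2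
  -- split B
  set B1 := {p ∈ B | (p.1 - l, -p.2) ∈ S} with hB1
  set B2 := {p ∈ B | (p.1 + l + 1, -p.2) ∈ S} with hB2
  have hBsplit : B ⊆ B1 ∪ B2 := by
    intro p hp; rcases hbad p hp with h | h
    · exact Or.inl ⟨hp, h⟩
    · exact Or.inr ⟨hp, h⟩
  have hB1card : B1.ncard ≤ S.ncard := by
    apply Set.ncard_le_ncard_of_injOn (fun p => (p.1 - l, -p.2)) (fun p hp => hp.2) _ hSfin
    rintro ⟨a, s⟩ _ ⟨b, t⟩ _ h
    simp only [Prod.mk.injEq] at h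
    simp only [Prod.mk.injEq]; omega
  have hB2card : B2.ncard ≤ S.ncard := by
    apply Set.ncard_le_ncard_of_injOn (fun p => (p.1 + l + 1, -p.2)) (fun p hp => hp.2) _ hSfin
    rintro ⟨a, s⟩ _ ⟨b, t⟩ _ h
    simp only [Prod.mk.injEq] at h
    simp only [Prod.mk.injEq]; omega
  have hBcard : B.ncard ≤ 2 * S.ncard := by
    calc B.ncard ≤ (B1 ∪ B2).ncard :=
          Set.ncard_le_ncard hBsplit ((hBfin.subset (fun p hp => hp.1)).union
            (hBfin.subset (fun p hp => hp.1)))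
      _ ≤ B1.ncard + B2.ncard := Set.ncard_union_le _ _
      _ ≤ 2 * S.ncard := by omega
  have hAcard : A.ncard ≤ G.ncard + B.ncard := by
    calc A.ncard ≤ (G ∪ B).ncard := Set.ncard_le_ncard
          (fun p hp => by by_cases h : p ∈ G; exact Or.inl h; exact Or.inr ⟨hp, h⟩)
          (hGfin.union hBfin)
      _ ≤ G.ncard + B.ncard := Set.ncard_union_le _ _
  have e1 : runCount (l + 1) m n ξ = A.ncard := rfl
  have e2 : runCount l m n ξ = S.ncard := rfl
  have e3 : G.ncard = Set.ncard {p : ℤ × ℤ |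
        (p.2 = 1 ∨ p.2 = -1) ∧ IsMaxRun ξ (l + 1) m n p.1 p.2 ∧
        ∀ x ∈ ({p.1, p.1 + l} : Set ℤ), ∀ v ∈ ({0, -p.2} : Set ℤ),
          runCount l m n (Function.update ξ x v) ≥ runCount l m n ξ + 1} := rfl
  rw [e1, e2, ← e3]
  omega
end

section
/- Let ξ : ℤ → {−1,0,1} be a configuration, l ≥ 1 an integer, m ≤ n integers, x ∈ ℤ and v ∈ {−1,0,1}. If g^l_{m,n}(ξ^{x→v}) < g^l_{m,n}(ξ), then there exist a ∈ ℤ and a sign s ∈ {−1,1} such that ξ has a maximal l-run of sign s at a within [m,n] and a − 1 ≤ x ≤ a + l. In words: a single-site change can decrease the count of l-runs only if the changed site lies in, or is adjacent to, some counted maximal l-run. -/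
lemma runSet_finite_s6 (l m n : ℤ) (hl : 1 ≤ l) (ξ : ℤ → ℤ) :
    {p : ℤ × ℤ | (p.2 = 1 ∨ p.2 = -1) ∧ IsMaxRun ξ l m n p.1 p.2}.Finite := by
  apply Set.Finite.subset ((Set.finite_Icc m n).prod (Set.finite_Icc (-1 : ℤ) 1))
  rintro ⟨a, s⟩ ⟨hs, hrun⟩
  obtain ⟨_, _, _, hma, han⟩ := hrun
  constructor
  · exact ⟨hma, by linarith⟩
  · rcases hs with h | h <;> simp [h] <;> omega

theorem runCount_decrease_loc (ξ : ℤ → ℤ) (hξ : ∀ x, ξ x = -1 ∨ ξ x = 0 ∨ ξ x = 1)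
    (l m n : ℤ) (hl : 1 ≤ l) (hmn : m ≤ n)
    (x v : ℤ) (hv : v = -1 ∨ v = 0 ∨ v = 1)
    (hdec : runCount l m n (Function.update ξ x v) < runCount l m n ξ) :
    ∃ a s : ℤ, (s = 1 ∨ s = -1) ∧ IsMaxRun ξ l m n a s ∧ a - 1 ≤ x ∧ x ≤ a + l := by
  by_contra hcon
  push_neg at hcon
  have hsub : {p : ℤ × ℤ | (p.2 = 1 ∨ p.2 = -1) ∧ IsMaxRun ξ l m n p.1 p.2} ⊆
      {p : ℤ × ℤ | (p.2 = 1 ∨ p.2 = -1) ∧ IsMaxRun (Function.update ξ x v) l m n p.1 p.2} := by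
    rintro ⟨a, s⟩ ⟨hs, hrun⟩
    have hfar : x < a - 1 ∨ a + l < x := by
      by_contra h
      push_neg at h
      exact absurd (hcon a s hs hrun h.1) (not_lt.mpr h.2)
    have heq : ∀ y : ℤ, a - 1 ≤ y → y ≤ a + l → Function.update ξ x v y = ξ y := by
      intro y h1 h2
      have : y ≠ x := by rcases hfar with h | h <;> omega
      exact Function.update_of_ne this v ξ
    obtain ⟨hr, h1, h2, h3, h4⟩ := hrun
    refine ⟨hs, fun i hi hi' => ?_, ?_, ?_, h3, h4⟩
    · rw [heq (a + i) (by omega) (by omega)]; exact hr i hi hi'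
    · rw [heq (a - 1) (by omega) (by omega)]; exact h1
    · rw [heq (a + l) (by omega) (by omega)]; exact h2
  have := Set.ncard_le_ncard hsub (runSet_finite_s6 l m n hl (Function.update ξ x v))
  exact absurd this (not_le.mpr hdec)
end

section
/- Let ν be a Borel probability measure on the product space ({0,1}^ℤ) × ({0,1}^ℤ) (product topology), let l ≥ 1 be an integer and m ≤ n integers, and suppose that ∫ Ω̃ g^l_{m,n} dν = 0 (the invariance identity for the cylinder function g^l_{m,n} under the basic coupling). Then ε · ∫ g^{l+1}_{m,n} dν ≤ (4 K l + 2 ε) · ∫ g^l_{m,n} dν. -/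
/-- Flip the spin of `η` at site `x`. -/
def flipAt (η : ℤ → Bool) (x : ℤ) : ℤ → Bool := Function.update η x (!η x)

/-- The discrepancy configuration `ξ_{η,ζ}(x) = η(x) − ζ(x)` with values in `{−1,0,1}`. -/
def discrep (η ζ : ℤ → Bool) : ℤ → ℤ :=
  fun x => (if η x then 1 else 0) - (if ζ x then 1 else 0)

/-- `g^l_{m,n}(η, ζ) = g^l_{m,n}(ξ_{η,ζ})`. -/
noncomputable def gPair (l m n : ℤ) (η ζ : ℤ → Bool) : ℕ :=
  runCount l m n (discrep η ζ)

/-- The nearest-neighbor flip rate `c(x, η) = F(η(x−1), η(x), η(x+1))`. -/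
def rate (F : Bool → Bool → Bool → ℝ) (x : ℤ) (η : ℤ → Bool) : ℝ :=
  F (η (x - 1)) (η x) (η (x + 1))

/-- The basic-coupling generator applied to `g^l_{m,n}`, written as a finite
sum over the sites `x ∈ [m−1, n+1]` (flips at other sites do not change `g^l_{m,n}`). -/
noncomputable def omegaG (F : Bool → Bool → Bool → ℝ) (l m n : ℤ) (η ζ : ℤ → Bool) : ℝ :=
  ∑ x ∈ Finset.Icc (m - 1) (n + 1),
    ((min (rate F x η) (rate F x ζ)) *
        ((gPair l m n (flipAt η x) (flipAt ζ x) : ℝ) - (gPair l m n η ζ : ℝ)) +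
      (rate F x η - min (rate F x η) (rate F x ζ)) *
        ((gPair l m n (flipAt η x) ζ : ℝ) - (gPair l m n η ζ : ℝ)) +
      (rate F x ζ - min (rate F x η) (rate F x ζ)) *
        ((gPair l m n η (flipAt ζ x) : ℝ) - (gPair l m n η ζ : ℝ)))

/-!
Pointwise, `Ω̃ g^l ≥ ε g^{l+1} - K (l+2) g^l`. A maximal run of length `l+1` starting at `a`
turns, under the joint flip at `a` (rate `min (c(a,η)) (c(a,ζ)) ≥ ε`), into a maximal `l`-run
starting at `a+1` that was not there before, and distinct `(l+1)`-runs start at distinct sites.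
An existing `l`-run can only be destroyed by a flip in its window `[a-1, a+l]` of `l+2` sites,
and at each site the three coupled transitions have total rate `max (c(x,η)) (c(x,ζ)) ≤ K`.
Integrating against `ν` kills the left-hand side, and `K (l+2) ≤ 4 K l + 2 ε`.
-/

open Finset Function MeasureTheory

section Runs

variable {ξ ξ' : ℤ → ℤ} {l m n a s : ℤ}

lemma IsMaxRun.congr (hl : 0 ≤ l) (h : IsMaxRun ξ l m n a s)
    (hξ : Set.EqOn ξ ξ' (Set.Icc (a - 1) (a + l))) : IsMaxRun ξ' l m n a s := by
  obtain ⟨hrun, hleft, hright, hma, han⟩ := h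
  refine ⟨fun i h0 h1 => ?_, ?_, ?_, hma, han⟩
  · rw [← hξ ⟨by omega, by omega⟩]
    exact hrun i h0 h1
  · rwa [← hξ ⟨le_rfl, by omega⟩]
  · rwa [← hξ ⟨by omega, le_rfl⟩]

lemma runCount_congr (hl : 0 ≤ l) (hξ : Set.EqOn ξ ξ' (Set.Icc (m - 1) (n + 1))) :
    runCount l m n ξ = runCount l m n ξ' := by
  have transfer : ∀ {ξ ξ' : ℤ → ℤ}, Set.EqOn ξ ξ' (Set.Icc (m - 1) (n + 1)) →
      ∀ {a s}, IsMaxRun ξ l m n a s → IsMaxRun ξ' l m n a s := fun hξ _ _ h =>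
    h.congr hl (hξ.mono fun _ hy => Set.mem_Icc.2
      ⟨by linarith [hy.1, h.2.2.2.1], by linarith [hy.2, h.2.2.2.2]⟩)
  unfold runCount
  congr 1
  ext p
  exact and_congr_right fun _ => ⟨transfer hξ, transfer hξ.symm⟩

lemma IsMaxRun.apply_self (hl : 0 ≤ l) (h : IsMaxRun ξ (l + 1) m n a s) : ξ a = s := by
  simpa using h.1 0 le_rfl (by omega)

lemma IsMaxRun.succ_of_flip (hl : 0 ≤ l) (hs : s ≠ 0) (h : IsMaxRun ξ (l + 1) m n a s)
    (hflip : ξ' a = -ξ a) (hξ' : ∀ y ≠ a, ξ' y = ξ y) : IsMaxRun ξ' l m n (a + 1) s := by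
  have hξa := h.apply_self hl
  obtain ⟨hrun, -, hright, hma, han⟩ := h
  refine ⟨fun i h0 h1 => ?_, ?_, ?_, by omega, by omega⟩
  · rw [hξ' _ (by omega), add_assoc]
    exact hrun (1 + i) (by omega) (by omega)
  · rw [add_sub_cancel_right, hflip, hξa]
    omega
  · rw [hξ' _ (by omega), add_assoc, add_comm 1]
    exact hright

end Runs

open Classical in
noncomputable def maxRuns (l m n : ℤ) (ξ : ℤ → ℤ) : Finset (ℤ × ℤ) :=
  (Icc m (n + 1 - l) ×ˢ {1, -1}).filter fun p => IsMaxRun ξ l m n p.1 p.2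

section MaxRuns

variable {ξ : ℤ → ℤ} {l m n : ℤ}

lemma mem_maxRuns {p : ℤ × ℤ} :
    p ∈ maxRuns l m n ξ ↔ (p.2 = 1 ∨ p.2 = -1) ∧ IsMaxRun ξ l m n p.1 p.2 := by
  simp only [maxRuns, mem_filter, mem_product, mem_Icc, mem_insert, mem_singleton]
  exact ⟨fun ⟨⟨_, hs⟩, h⟩ => ⟨hs, h⟩, fun ⟨hs, h⟩ => ⟨⟨⟨h.2.2.2.1, by linarith [h.2.2.2.2]⟩, hs⟩, h⟩⟩

lemma runCount_eq_card : runCount l m n ξ = (maxRuns l m n ξ).card := by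
  rw [runCount, ← Set.ncard_coe_finset]
  congr 1
  ext p
  simp [mem_maxRuns]

lemma card_image_fst_maxRuns_succ (hl : 0 ≤ l) :
    ((maxRuns (l + 1) m n ξ).image Prod.fst).card = (maxRuns (l + 1) m n ξ).card := by
  refine card_image_of_injOn fun p hp q hq hpq => Prod.ext hpq ?_
  rw [← (mem_maxRuns.1 hp).2.apply_self hl, ← (mem_maxRuns.1 hq).2.apply_self hl, hpq]

end MaxRuns

def coupledMove (η ζ : ℤ → Bool) (x : ℤ) : Fin 3 → (ℤ → Bool) × (ℤ → Bool) :=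
  ![(flipAt η x, flipAt ζ x), (flipAt η x, ζ), (η, flipAt ζ x)]

noncomputable def coupledRate (F : Bool → Bool → Bool → ℝ) (η ζ : ℤ → Bool) (x : ℤ) :
    Fin 3 → ℝ :=
  ![min (rate F x η) (rate F x ζ), rate F x η - min (rate F x η) (rate F x ζ),
    rate F x ζ - min (rate F x η) (rate F x ζ)]

section Coupling

variable {F : Bool → Bool → Bool → ℝ} {η ζ : ℤ → Bool} {l m n x : ℤ}

lemma omegaG_eq_sum : omegaG F l m n η ζ = ∑ x ∈ Icc (m - 1) (n + 1), ∑ j,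
    coupledRate F η ζ x j *
      ((gPair l m n (coupledMove η ζ x j).1 (coupledMove η ζ x j).2 : ℝ) - gPair l m n η ζ) := by
  simp [omegaG, Fin.sum_univ_three, coupledRate, coupledMove, add_assoc]

lemma coupledRate_nonneg (hF : ∀ u v w, 0 ≤ F u v w) (j : Fin 3) :
    0 ≤ coupledRate F η ζ x j := by
  have : 0 ≤ min (rate F x η) (rate F x ζ) := le_min (hF _ _ _) (hF _ _ _)
  fin_cases j <;> simp [coupledRate, this]

lemma sum_coupledRate : ∑ j, coupledRate F η ζ x j = max (rate F x η) (rate F x ζ) := by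
  simp only [coupledRate, Fin.sum_univ_three, Matrix.cons_val_zero, Matrix.cons_val_one,
    add_sub_cancel, Matrix.cons_val]
  linarith [min_add_max (rate F x η) (rate F x ζ)]

lemma coupledMove_apply_of_ne {y : ℤ} (hy : y ≠ x) (j : Fin 3) :
    (coupledMove η ζ x j).1 y = η y ∧ (coupledMove η ζ x j).2 y = ζ y := by
  fin_cases j <;> simp [coupledMove, flipAt, update_of_ne hy]

lemma discrep_coupledMove_of_ne {y : ℤ} (hy : y ≠ x) (j : Fin 3) :
    discrep (coupledMove η ζ x j).1 (coupledMove η ζ x j).2 y = discrep η ζ y := by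
  simp only [discrep, coupledMove_apply_of_ne hy j]

lemma discrep_flipAt_flipAt_self :
    discrep (flipAt η x) (flipAt ζ x) x = -discrep η ζ x := by
  simp only [discrep, flipAt, update_self]
  cases η x <;> cases ζ x <;> simp

end Coupling

section Counting

variable {ι κ α : Type*} [Fintype κ] [DecidableEq α]
  (T : Finset ι) (S : Finset α) (S' : ι → κ → Finset α) {r : ι → κ → ℝ}

lemma cast_card_sub_cast_card (s t : Finset α) :
    (t.card : ℝ) - s.card = (t \ s).card - (s \ t).card := by
  have hs := card_sdiff_add_card_inter s t
  have ht := card_sdiff_add_card_inter t s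
  rw [inter_comm] at ht
  rw [← hs, ← ht]
  push_cast
  ring

lemma le_sum_mul_card_sdiff {A : Finset ι} (j₀ : κ) {ε : ℝ} (hr : ∀ x j, 0 ≤ r x j)
    (hε : ∀ x, ε ≤ r x j₀) (hAT : A ⊆ T) (hA : ∀ x ∈ A, ¬ S' x j₀ ⊆ S) :
    ε * A.card ≤ ∑ x ∈ T, ∑ j, r x j * ((S' x j \ S).card : ℝ) := by
  have hterm : ∀ x j, 0 ≤ r x j * ((S' x j \ S).card : ℝ) := fun x j =>
    mul_nonneg (hr x j) (Nat.cast_nonneg _)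
  calc ε * A.card = ∑ _x ∈ A, ε := by rw [sum_const, nsmul_eq_mul, mul_comm]
    _ ≤ ∑ x ∈ A, ∑ j, r x j * ((S' x j \ S).card : ℝ) := by
      refine sum_le_sum fun x hx => ?_
      have hnew : (1 : ℝ) ≤ (S' x j₀ \ S).card := by
        exact_mod_cast card_pos.2 (sdiff_nonempty.2 (hA x hx))
      calc ε ≤ r x j₀ * 1 := by rw [mul_one]; exact hε x
        _ ≤ r x j₀ * ((S' x j₀ \ S).card : ℝ) := mul_le_mul_of_nonneg_left hnew (hr x j₀)
        _ ≤ _ := single_le_sum (fun j _ => hterm x j) (mem_univ j₀)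
    _ ≤ _ := sum_le_sum_of_subset_of_nonneg hAT fun x _ _ => sum_nonneg fun j _ => hterm x j

lemma sum_mul_card_sdiff_le [DecidableEq ι] {K : ℝ} (W : α → Finset ι) (hr : ∀ x j, 0 ≤ r x j)
    (hrK : ∀ x, ∑ j, r x j ≤ K) (hW : ∀ p ∈ S, ∀ x ∉ W p, ∀ j, p ∈ S' x j) :
    ∑ x ∈ T, ∑ j, r x j * ((S \ S' x j).card : ℝ) ≤ K * ∑ p ∈ S, ((W p).card : ℝ) := by
  have hcard : ∀ x j, ((S \ S' x j).card : ℝ) = ∑ p ∈ S, if p ∈ S' x j then 0 else 1 := by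
    intro x j
    rw [sdiff_eq_filter, card_filter]
    push_cast
    simp only [ite_not]
  simp only [hcard, mul_sum, mul_ite, mul_zero, mul_one]
  rw [sum_congr rfl fun x _ => sum_comm, sum_comm]
  refine sum_le_sum fun p hp => ?_
  set f : ι → ℝ := fun x => ∑ j, if p ∈ S' x j then 0 else r x j
  have hf0 : ∀ x, 0 ≤ f x := fun x => sum_nonneg fun j _ => by split_ifs <;> simp [hr x j]
  have hfK : ∀ x, f x ≤ K := fun x =>
    (sum_le_sum fun j _ => by split_ifs <;> simp [hr x j]).trans (hrK x)
  have hfW : ∀ x ∈ T, f x ≠ 0 → x ∈ W p := fun x _ hx => by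
    by_contra hxW
    exact hx (sum_eq_zero fun j _ => if_pos (hW p hp x hxW j))
  calc ∑ x ∈ T, f x = ∑ x ∈ T with x ∈ W p, f x := (sum_filter_of_ne hfW).symm
    _ ≤ ∑ x ∈ W p, f x :=
      sum_le_sum_of_subset_of_nonneg (fun x hx => (mem_filter.1 hx).2) fun x _ _ => hf0 x
    _ ≤ ∑ _x ∈ W p, K := sum_le_sum fun x _ => hfK x
    _ = K * (W p).card := by rw [sum_const, nsmul_eq_mul, mul_comm]

lemma le_sum_mul_card_sub_card [DecidableEq ι] {A : Finset ι} (j₀ : κ) {ε K : ℝ}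
    (W : α → Finset ι) (hr : ∀ x j, 0 ≤ r x j) (hrK : ∀ x, ∑ j, r x j ≤ K)
    (hε : ∀ x, ε ≤ r x j₀) (hAT : A ⊆ T) (hA : ∀ x ∈ A, ¬ S' x j₀ ⊆ S)
    (hW : ∀ p ∈ S, ∀ x ∉ W p, ∀ j, p ∈ S' x j) :
    ε * A.card - K * ∑ p ∈ S, ((W p).card : ℝ) ≤
      ∑ x ∈ T, ∑ j, r x j * (((S' x j).card : ℝ) - S.card) := by
  simp only [cast_card_sub_cast_card S, mul_sub, sum_sub_distrib]
  linarith [le_sum_mul_card_sdiff T S S' j₀ hr hε hAT hA, sum_mul_card_sdiff_le T S S' W hr hrK hW]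

end Counting

section PointwiseBound

variable {η ζ : ℤ → Bool} {l m n : ℤ}

lemma mem_maxRuns_coupledMove {p : ℤ × ℤ} {x : ℤ} (hl : 0 ≤ l)
    (hp : p ∈ maxRuns l m n (discrep η ζ)) (hx : x ∉ Icc (p.1 - 1) (p.1 + l)) (j : Fin 3) :
    p ∈ maxRuns l m n (discrep (coupledMove η ζ x j).1 (coupledMove η ζ x j).2) := by
  obtain ⟨hs, hrun⟩ := mem_maxRuns.1 hp
  refine mem_maxRuns.2 ⟨hs, hrun.congr hl fun y hy => ?_⟩
  have hyx : y ≠ x := by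
    rintro rfl
    exact hx (mem_Icc.2 hy)
  exact (discrep_coupledMove_of_ne hyx j).symm

lemma mem_maxRuns_flipAt_of_mem_maxRuns_succ {a s : ℤ} (hl : 0 ≤ l)
    (h : (a, s) ∈ maxRuns (l + 1) m n (discrep η ζ)) :
    (a + 1, s) ∈ maxRuns l m n (discrep (flipAt η a) (flipAt ζ a)) ∧
      (a + 1, s) ∉ maxRuns l m n (discrep η ζ) := by
  obtain ⟨hs, hrun⟩ := mem_maxRuns.1 h
  refine ⟨mem_maxRuns.2 ⟨hs, hrun.succ_of_flip hl (by omega) discrep_flipAt_flipAt_self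
    fun y hy => discrep_coupledMove_of_ne hy 0⟩, fun h' => ?_⟩
  have hleft := (mem_maxRuns.1 h').2.2.1
  rw [add_sub_cancel_right] at hleft
  exact hleft (hrun.apply_self hl)

theorem sub_le_omegaG {F : Bool → Bool → Bool → ℝ} {ε K : ℝ} (hε : 0 ≤ ε)
    (hF : ∀ u v w, ε ≤ F u v w ∧ F u v w ≤ K) (hl : 0 ≤ l) (η ζ : ℤ → Bool) :
    ε * gPair (l + 1) m n η ζ - K * (l + 2) * gPair l m n η ζ ≤ omegaG F l m n η ζ := by
  set S := maxRuns l m n (discrep η ζ)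
  set A := (maxRuns (l + 1) m n (discrep η ζ)).image Prod.fst
  have key := le_sum_mul_card_sub_card (Icc (m - 1) (n + 1)) S
    (fun x j => maxRuns l m n (discrep (coupledMove η ζ x j).1 (coupledMove η ζ x j).2))
    (r := coupledRate F η ζ) (A := A) (ε := ε) (K := K) 0 (fun p => Icc (p.1 - 1) (p.1 + l))
    (fun x => coupledRate_nonneg (fun u v w => hε.trans (hF u v w).1))
    (fun x => sum_coupledRate.trans_le (max_le (hF _ _ _).2 (hF _ _ _).2))
    (fun x => le_min (hF _ _ _).1 (hF _ _ _).1) ?_ ?_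
    (fun p hp x hx j => mem_maxRuns_coupledMove hl hp hx j)
  · have hwindow : ∀ p ∈ S, ((Icc (p.1 - 1) (p.1 + l)).card : ℝ) = l + 2 := fun p _ => by
      rw [Int.card_Icc, show p.1 + l + 1 - (p.1 - 1) = l + 2 by ring]
      exact_mod_cast Int.toNat_of_nonneg (by omega)
    rw [sum_congr rfl hwindow, sum_const, nsmul_eq_mul, card_image_fst_maxRuns_succ hl] at key
    rw [omegaG_eq_sum]
    simp only [gPair, runCount_eq_card]
    linarith
  · intro x hx
    obtain ⟨⟨a, s⟩, hp, rfl⟩ := mem_image.1 hx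
    have hrun := (mem_maxRuns.1 hp).2
    exact mem_Icc.2 ⟨by linarith [hrun.2.2.2.1], by linarith [hrun.2.2.2.2]⟩
  · intro x hx hsub
    obtain ⟨⟨a, s⟩, hp, rfl⟩ := mem_image.1 hx
    obtain ⟨hnew, hold⟩ := mem_maxRuns_flipAt_of_mem_maxRuns_succ hl hp
    exact hold (hsub hnew)

end PointwiseBound

section Locality

lemma integrable_of_dependsOn_finset {W : Finset ℤ} {f : (ℤ → Bool) × (ℤ → Bool) → ℝ}
    (hf : ∀ p q : (ℤ → Bool) × (ℤ → Bool), Set.EqOn p.1 q.1 W → Set.EqOn p.2 q.2 W → f p = f q)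
    (ν : Measure ((ℤ → Bool) × (ℤ → Bool))) [IsFiniteMeasure ν] : Integrable f ν := by
  let e := MeasurableEquiv.arrowProdEquivProdArrow Bool Bool ℤ
  have hdep : DependsOn (f ∘ e) (W : Set ℤ) := fun u v huv =>
    hf _ _ (fun i hi => congrArg Prod.fst (huv i hi)) fun i hi => congrArg Prod.snd (huv i hi)
  obtain ⟨g, hg⟩ := dependsOn_iff_exists_comp.1 hdep
  have hfg : f = g ∘ (W : Set ℤ).domRestrict ∘ e.symm := by
    rw [← Function.comp_assoc, ← hg, Function.comp_assoc, e.self_comp_symm, Function.comp_id]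
  rw [hfg]
  exact Integrable.of_finite.comp_measurable ((Set.measurable_restrict _).comp e.symm.measurable)

variable {F : Bool → Bool → Bool → ℝ} {η η' ζ ζ' : ℤ → Bool} {l m n : ℤ}

lemma gPair_congr (hl : 0 ≤ l) (hη : Set.EqOn η η' (Set.Icc (m - 1) (n + 1)))
    (hζ : Set.EqOn ζ ζ' (Set.Icc (m - 1) (n + 1))) : gPair l m n η ζ = gPair l m n η' ζ' :=
  runCount_congr hl fun y hy => by simp only [discrep, hη hy, hζ hy]

lemma Set.EqOn.flipAt {W : Set ℤ} (h : Set.EqOn η η' W) (x : ℤ) :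
    Set.EqOn (flipAt η x) (flipAt η' x) W := by
  intro y hy
  by_cases hyx : y = x
  · subst hyx
    simp [_root_.flipAt, h hy]
  · simp [_root_.flipAt, update_of_ne hyx, h hy]

lemma omegaG_congr (hl : 0 ≤ l) (hη : Set.EqOn η η' (Set.Icc (m - 2) (n + 2)))
    (hζ : Set.EqOn ζ ζ' (Set.Icc (m - 2) (n + 2))) : omegaG F l m n η ζ = omegaG F l m n η' ζ' := by
  have hwindow : Set.Icc (m - 1) (n + 1) ⊆ Set.Icc (m - 2) (n + 2) :=
    Set.Icc_subset_Icc (by omega) (by omega)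
  have hg : ∀ {η η' ζ ζ' : ℤ → Bool}, Set.EqOn η η' (Set.Icc (m - 2) (n + 2)) →
      Set.EqOn ζ ζ' (Set.Icc (m - 2) (n + 2)) → gPair l m n η ζ = gPair l m n η' ζ' :=
    fun hη hζ => gPair_congr hl (hη.mono hwindow) (hζ.mono hwindow)
  unfold omegaG
  refine sum_congr rfl fun x hx => ?_
  obtain ⟨hx₁, hx₂⟩ := mem_Icc.1 hx
  have hrate : ∀ {η η' : ℤ → Bool}, Set.EqOn η η' (Set.Icc (m - 2) (n + 2)) →
      rate F x η = rate F x η' := fun h => by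
    simp only [rate, h (⟨by omega, by omega⟩ : x - 1 ∈ Set.Icc (m - 2) (n + 2)),
      h (⟨by omega, by omega⟩ : x ∈ Set.Icc (m - 2) (n + 2)),
      h (⟨by omega, by omega⟩ : x + 1 ∈ Set.Icc (m - 2) (n + 2))]
  rw [hrate hη, hrate hζ, hg hη hζ, hg (hη.flipAt x) (hζ.flipAt x), hg (hη.flipAt x) hζ,
    hg hη (hζ.flipAt x)]

variable (ν : Measure ((ℤ → Bool) × (ℤ → Bool))) [IsFiniteMeasure ν]

lemma integrable_gPair (hl : 0 ≤ l) : Integrable (fun p => (gPair l m n p.1 p.2 : ℝ)) ν :=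
  integrable_of_dependsOn_finset (W := Icc (m - 1) (n + 1))
    (fun p q h₁ h₂ => by rw [gPair_congr hl (by simpa using h₁) (by simpa using h₂)]) ν

lemma integrable_omegaG (hl : 0 ≤ l) : Integrable (fun p => omegaG F l m n p.1 p.2) ν :=
  integrable_of_dependsOn_finset (W := Icc (m - 2) (n + 2))
    (fun p q h₁ h₂ => omegaG_congr hl (by simpa using h₁) (by simpa using h₂)) ν

end Locality

open MeasureTheory in
theorem integral_estimate_general (F : Bool → Bool → Bool → ℝ) (ε K : ℝ)
    (hε : 0 < ε)
    (hF : ∀ u v w : Bool, ε ≤ F u v w ∧ F u v w ≤ K)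
    (ν : Measure ((ℤ → Bool) × (ℤ → Bool))) [IsProbabilityMeasure ν]
    (l m n : ℤ) (hl : 1 ≤ l)
    (hinv : ∫ p, omegaG F l m n p.1 p.2 ∂ν = 0) :
    ε * ∫ p, (gPair (l + 1) m n p.1 p.2 : ℝ) ∂ν ≤
      (4 * K * (l : ℝ) + 2 * ε) * ∫ p, (gPair l m n p.1 p.2 : ℝ) ∂ν := by
  have hl₀ : 0 ≤ l := by omega
  have hεK : ε ≤ K := (hF true true true).1.trans (hF true true true).2
  have hg := (integrable_gPair (m := m) (n := n) ν hl₀).const_mul (K * (l + 2))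
  have hg' := (integrable_gPair (m := m) (n := n) ν (by omega : 0 ≤ l + 1)).const_mul ε
  have hdrift := integral_mono (hg'.sub hg) (integrable_omegaG (F := F) ν hl₀)
    fun p => sub_le_omegaG hε.le hF hl₀ p.1 p.2
  simp only [Pi.sub_apply] at hdrift
  rw [integral_sub hg' hg, integral_const_mul, integral_const_mul, hinv] at hdrift
  have hcoef : K * (l + 2) ≤ 4 * K * l + 2 * ε := by
    have : (1 : ℝ) ≤ l := by exact_mod_cast hl
    nlinarith
  have hg₀ : 0 ≤ ∫ p, (gPair l m n p.1 p.2 : ℝ) ∂ν := integral_nonneg fun _ => Nat.cast_nonneg _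
  nlinarith [mul_le_mul_of_nonneg_right hcoef hg₀]

open MeasureTheory in
theorem integral_estimate (F : Bool → Bool → Bool → ℝ) (ε K : ℝ)
    (hε : 0 < ε) (hεK : ε ≤ K)
    (hF : ∀ u v w : Bool, ε ≤ F u v w ∧ F u v w ≤ K)
    (ν : Measure ((ℤ → Bool) × (ℤ → Bool))) [IsProbabilityMeasure ν]
    (l m n : ℤ) (hl : 1 ≤ l) (hmn : m ≤ n)
    (hinv : ∫ p, omegaG F l m n p.1 p.2 ∂ν = 0) :
    ε * ∫ p, (gPair (l + 1) m n p.1 p.2 : ℝ) ∂ν ≤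
      (4 * K * (l : ℝ) + 2 * ε) * ∫ p, (gPair l m n p.1 p.2 : ℝ) ∂ν :=
  integral_estimate_general F ε K hε hF ν l m n hl hinv
end
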